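/- Let K be a field with char K ≠ 2 and let 𝔤 be a finitely generated Lie algebra over K. Then the abelianization L(𝔤)/[L(𝔤), L(𝔤)] of the ideal L(𝔤) ⊆ χ(𝔤) is finite dimensional over K. Equivalently, if I denotes the two-sided associative ideal of U(𝔤) generated by the elements x² for x ∈ 𝔤, then the quotient Aug(U(𝔤))/I is finite dimensional, and L(𝔤)/[L(𝔤), L(𝔤)] ≅ Aug(U(𝔤))/I. -/

import Mathlib

/- Formalization of a statement from "Weak commutativity for Lie algebras"
   (arXiv:1808.10303). All Lie algebras are over a fixed field `K` with `char K ≠ 2`. -/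

universe u v w

set_option linter.unusedVariables false

section WeakCommutativity

variable (K : Type u) [Field K] (g : Type v) [LieRing g] [LieAlgebra K g]

/-- The image of `x ∈ g` (first copy) in the free Lie algebra on two copies of `g`. -/
noncomputable def ofl (x : g) : FreeLieAlgebra K (g ⊕ g) := FreeLieAlgebra.of K (Sum.inl x)

/-- The image of `xᵠ ∈ gᵠ` (second copy) in the free Lie algebra on two copies of `g`. -/
noncomputable def ofr (x : g) : FreeLieAlgebra K (g ⊕ g) := FreeLieAlgebra.of K (Sum.inr x)

/-- Relators presenting `χ(g)` as a quotient of the free Lie algebra on the disjoint union of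
two copies of (the underlying type of) `g`: the relations presenting the free Lie product
(coproduct) of `g` and its copy `gᵠ`, together with the weak commutativity relations
`⁅x, xᵠ⁆ = 0` for all `x ∈ g`. -/
def chiRelators : Set (FreeLieAlgebra K (g ⊕ g)) :=
  { z | (∃ x y : g, z = ofl K g (x + y) - ofl K g x - ofl K g y)
      ∨ (∃ (c : K) (x : g), z = ofl K g (c • x) - c • ofl K g x)
      ∨ (∃ x y : g, z = ofl K g ⁅x, y⁆ - ⁅ofl K g x, ofl K g y⁆)
      ∨ (∃ x y : g, z = ofr K g (x + y) - ofr K g x - ofr K g y)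
      ∨ (∃ (c : K) (x : g), z = ofr K g (c • x) - c • ofr K g x)
      ∨ (∃ x y : g, z = ofr K g ⁅x, y⁆ - ⁅ofr K g x, ofr K g y⁆)
      ∨ (∃ x : g, z = ⁅ofl K g x, ofr K g x⁆) }

/-- The ideal of relations defining `χ(g)`. -/
noncomputable def chiIdeal : LieIdeal K (FreeLieAlgebra K (g ⊕ g)) :=
  LieSubmodule.lieSpan K (FreeLieAlgebra K (g ⊕ g)) (chiRelators K g)

/-- Sidki's weak commutativity Lie algebra `χ(g)`: the quotient of the free Lie product of
two isomorphic copies `g`, `gᵠ` of `g` by the ideal generated by the brackets `⁅x, xᵠ⁆`. -/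
abbrev chi : Type (max u v) := FreeLieAlgebra K (g ⊕ g) ⧸ chiIdeal K g

/-- The canonical image of `x ∈ g` (first copy) in `χ(g)`. -/
noncomputable def chiι (x : g) : chi K g :=
  LieSubmodule.Quotient.mk (N := chiIdeal K g) (ofl K g x)

/-- The canonical image of `xᵠ` (the second copy of `x ∈ g`) in `χ(g)`. -/
noncomputable def chiψ (x : g) : chi K g :=
  LieSubmodule.Quotient.mk (N := chiIdeal K g) (ofr K g x)

/-- The ideal `L(g) ⊆ χ(g)`, generated by the elements `x - xᵠ` for `x ∈ g`. -/
noncomputable def chiL : LieIdeal K (chi K g) :=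
  LieSubmodule.lieSpan K (chi K g) (Set.range fun x : g => chiι K g x - chiψ K g x)

end WeakCommutativity

section LieAugmentation

attribute [local instance 100] LieRing.ofAssociativeRing

/-- The augmentation (counit) of the universal enveloping algebra, i.e. the unique algebra
homomorphism `U(h) → K` sending the image of `h` to `0`. -/
noncomputable def lieAugmentation (K : Type u) [Field K]
    (h : Type v) [LieRing h] [LieAlgebra K h] :
    UniversalEnvelopingAlgebra K h →ₐ[K] K :=
  UniversalEnvelopingAlgebra.lift K (0 : h →ₗ⁅K⁆ K)

end LieAugmentation

/-! Let `P = g ⧸ γ₃(g)`; it is two-step nilpotent, so it is spanned by the generators of `g` and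
their brackets, and is finite dimensional. Both quotients are images of `P`: modulo
`⁅L(g), L(g)⁆` the elements `δ x = x - xᵠ` satisfy `δ ⁅x, y⁆ = 2 ⁅x, δ y⁆` and span the image of
`L(g)`, which forces `δ` to vanish on `γ₃(g)` once `2` is invertible; on the other side
`U(g) = K ⊕ g + I` because `x y ≡ ½ ⁅x, y⁆` modulo `I`. Both maps out of `P` are injective, as
they have left inverses built from one representation of `g` on `K ⊕ P`: left multiplication in
the algebra with product `m * n = ½ ⁅m, n⁆` on `P`, in which every `x ∈ g` squares to zero. -/

namespace LieIdeal

variable {R L L' : Type*} [CommRing R] [LieRing L] [LieAlgebra R L] [LieRing L'] [LieAlgebra R L']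
  (I : LieIdeal R L)

def mkQ : L →ₗ⁅R⁆ L ⧸ I where
  toLinearMap := I.toSubmodule.mkQ
  map_lie' := LieSubmodule.Quotient.mk_bracket I _ _

lemma mkQ_surjective : Function.Surjective I.mkQ := I.toSubmodule.mkQ_surjective

def liftQ (f : L →ₗ⁅R⁆ L') (h : I ≤ f.ker) : L ⧸ I →ₗ⁅R⁆ L' where
  toLinearMap := I.toSubmodule.liftQ f.toLinearMap fun _ hx => h hx
  map_lie' {a b} := by
    obtain ⟨a, rfl⟩ := I.mkQ_surjective a
    obtain ⟨b, rfl⟩ := I.mkQ_surjective b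
    rw [← LieHom.map_lie]
    exact f.map_lie a b

@[simp]
lemma liftQ_mkQ (f : L →ₗ⁅R⁆ L') (h : I ≤ f.ker) (x : L) : I.liftQ f h (I.mkQ x) = f x := rfl

end LieIdeal

lemma FreeLieAlgebra.lieSpan_range_of {R X : Type*} [CommRing R] :
    LieSubalgebra.lieSpan R (FreeLieAlgebra R X) (Set.range (of R)) = ⊤ := by
  set S := LieSubalgebra.lieSpan R (FreeLieAlgebra R X) (Set.range (of R))
  have hS : S.incl.comp (lift R fun a => ⟨of R a, LieSubalgebra.subset_lieSpan ⟨a, rfl⟩⟩) =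
      LieHom.id (R := R) :=
    hom_ext fun a => by simp
  refine eq_top_iff.2 fun z _ => ?_
  rw [← LieHom.id_apply (R := R) z, ← hS]
  exact Subtype.property _

section LowerCentralSeries

open LieModule

variable {R L : Type*} [CommRing R] [LieRing L] [LieAlgebra R L]

lemma lie_lie_mem_lowerCentralSeries_two (x y z : L) :
    ⁅x, ⁅y, z⁆⁆ ∈ lowerCentralSeries R L L 2 :=
  LieSubmodule.lie_mem_lie (LieSubmodule.mem_top x)
    (LieSubmodule.lie_mem_lie (LieSubmodule.mem_top y) (LieSubmodule.mem_top z))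

lemma lowerCentralSeries_two_le {N : LieIdeal R L} (h : ∀ x y z : L, ⁅⁅x, y⁆, z⁆ ∈ N) :
    lowerCentralSeries R L L 2 ≤ N := by
  rw [lowerCentralSeries_succ, LieSubmodule.lie_le_iff]
  intro x _ m hm
  rw [lowerCentralSeries_succ, lowerCentralSeries_zero, ← LieSubmodule.mem_toSubmodule,
    LieSubmodule.lieIdeal_oper_eq_linear_span'] at hm
  induction hm using Submodule.span_induction with
  | mem _ hm =>
    obtain ⟨y, -, z, -, rfl⟩ := hm
    rw [← lie_skew]
    exact neg_mem (h y z x)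
  | zero => simp
  | add _ _ _ _ h₁ h₂ => rw [lie_add]; exact add_mem h₁ h₂
  | smul c _ _ h₁ => rw [lie_smul]; exact N.smul_mem c h₁

lemma lie_lie_eq_zero_of_quotient_lowerCentralSeries_two (x y : L)
    (m : L ⧸ lowerCentralSeries R L L 2) : ⁅x, ⁅y, m⁆⁆ = 0 := by
  obtain ⟨z, rfl⟩ := LieSubmodule.Quotient.surjective_mk' _ m
  exact LieSubmodule.Quotient.mk_eq_zero'.2 (lie_lie_mem_lowerCentralSeries_two x y z)

end LowerCentralSeries

section TwoStepNilpotent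

variable {R L : Type*} [CommRing R] [LieRing L] [LieAlgebra R L]

lemma lieSpan_le_span_union_image2_lie (h : ∀ x y z : L, ⁅x, ⁅y, z⁆⁆ = 0) (s : Set L) :
    (LieSubalgebra.lieSpan R L s).toSubmodule ≤
      Submodule.span R (s ∪ Set.image2 (⁅·, ·⁆) s s) := by
  set t := s ∪ Set.image2 (⁅·, ·⁆) s s
  have lie_mem_of_mem : ∀ u ∈ t, ∀ v ∈ t, ⁅u, v⁆ ∈ Submodule.span R t := by
    rintro u (hu | ⟨a, -, b, -, rfl⟩) v (hv | ⟨c, -, d, -, rfl⟩)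
    · exact Submodule.subset_span (Or.inr ⟨u, hu, v, hv, rfl⟩)
    · rw [h]; exact zero_mem _
    · rw [← lie_skew, h, neg_zero]; exact zero_mem _
    · rw [h]; exact zero_mem _
  let W : LieSubalgebra R L :=
    { Submodule.span R t with
      lie_mem' := fun {u v} hu hv => by
        induction hu, hv using Submodule.span_induction₂ with
        | mem_mem u v hu hv => exact lie_mem_of_mem u hu v hv
        | zero_left => simp
        | zero_right => simp
        | add_left _ _ _ _ _ _ h₁ h₂ => rw [add_lie]; exact Submodule.add_mem _ h₁ h₂
        | add_right _ _ _ _ _ _ h₁ h₂ => rw [lie_add]; exact Submodule.add_mem _ h₁ h₂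
        | smul_left c _ _ _ _ h₁ => rw [smul_lie]; exact Submodule.smul_mem _ c h₁
        | smul_right c _ _ _ _ h₁ => rw [lie_smul]; exact Submodule.smul_mem _ c h₁ }
  exact (LieSubalgebra.lieSpan_le (K := W)).2 fun x hx => Submodule.subset_span (Or.inl hx)

lemma Module.finite_of_lieSpan_eq_top_of_lie_lie_eq_zero (h : ∀ x y z : L, ⁅x, ⁅y, z⁆⁆ = 0)
    {s : Set L} (hs : s.Finite) (hgen : LieSubalgebra.lieSpan R L s = ⊤) : Module.Finite R L := by
  refine ⟨⟨(hs.union (hs.image2 (⁅·, ·⁆) hs)).toFinset, eq_top_iff.2 ?_⟩⟩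
  rw [Set.Finite.coe_toFinset, ← LieSubalgebra.top_toSubmodule, ← hgen]
  exact lieSpan_le_span_union_image2_lie h s

end TwoStepNilpotent

section Chi

variable (K : Type u) [Field K] (g : Type v) [LieRing g] [LieAlgebra K g]

lemma chiIdeal_mkQ_eq_zero {z : FreeLieAlgebra K (g ⊕ g)} (hz : z ∈ chiRelators K g) :
    (chiIdeal K g).mkQ z = 0 :=
  LieSubmodule.Quotient.mk_eq_zero'.2 (LieSubmodule.subset_lieSpan hz)

noncomputable def chiιHom : g →ₗ⁅K⁆ chi K g where
  toFun := chiι K g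
  map_add' x y := by
    have := chiIdeal_mkQ_eq_zero K g (Or.inl ⟨x, y, rfl⟩)
    rwa [map_sub, map_sub, sub_sub, sub_eq_zero] at this
  map_smul' c x := by
    have := chiIdeal_mkQ_eq_zero K g (Or.inr (Or.inl ⟨c, x, rfl⟩))
    rwa [map_sub, map_smul, sub_eq_zero] at this
  map_lie' {x y} := by
    have := chiIdeal_mkQ_eq_zero K g (Or.inr (Or.inr (Or.inl ⟨x, y, rfl⟩)))
    rwa [map_sub, LieHom.map_lie, sub_eq_zero] at this

noncomputable def chiψHom : g →ₗ⁅K⁆ chi K g where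
  toFun := chiψ K g
  map_add' x y := by
    have := chiIdeal_mkQ_eq_zero K g (Or.inr (Or.inr (Or.inr (Or.inl ⟨x, y, rfl⟩))))
    rwa [map_sub, map_sub, sub_sub, sub_eq_zero] at this
  map_smul' c x := by
    have := chiIdeal_mkQ_eq_zero K g (Or.inr (Or.inr (Or.inr (Or.inr (Or.inl ⟨c, x, rfl⟩)))))
    rwa [map_sub, map_smul, sub_eq_zero] at this
  map_lie' {x y} := by
    have := chiIdeal_mkQ_eq_zero K g
      (Or.inr (Or.inr (Or.inr (Or.inr (Or.inr (Or.inl ⟨x, y, rfl⟩))))))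
    rwa [map_sub, LieHom.map_lie, sub_eq_zero] at this

lemma chiι_lie (x y : g) : chiι K g ⁅x, y⁆ = ⁅chiι K g x, chiι K g y⁆ :=
  (chiιHom K g).map_lie x y

lemma chiψ_lie (x y : g) : chiψ K g ⁅x, y⁆ = ⁅chiψ K g x, chiψ K g y⁆ :=
  (chiψHom K g).map_lie x y

lemma lie_chiι_chiψ_self (x : g) : ⁅chiι K g x, chiψ K g x⁆ = 0 := by
  have := chiIdeal_mkQ_eq_zero K g
    (Or.inr (Or.inr (Or.inr (Or.inr (Or.inr (Or.inr ⟨x, rfl⟩))))))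
  rwa [LieHom.map_lie] at this

lemma lie_chiψ_chiι (x y : g) : ⁅chiψ K g x, chiι K g y⁆ = ⁅chiι K g x, chiψ K g y⁆ := by
  have h := lie_chiι_chiψ_self K g (x + y)
  change ⁅chiιHom K g (x + y), chiψHom K g (x + y)⁆ = 0 at h
  rw [map_add, map_add, add_lie, lie_add, lie_add] at h
  change ⁅chiι K g x, chiψ K g x⁆ + ⁅chiι K g x, chiψ K g y⁆ +
    (⁅chiι K g y, chiψ K g x⁆ + ⁅chiι K g y, chiψ K g y⁆) = 0 at h
  rw [lie_chiι_chiψ_self, lie_chiι_chiψ_self, zero_add, add_zero] at h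
  rw [← lie_skew]
  exact neg_eq_of_add_eq_zero_left h

lemma chi_lieSpan_eq_top :
    LieSubalgebra.lieSpan K (chi K g) (Set.range (chiι K g) ∪ Set.range (chiψ K g)) = ⊤ := by
  have : Set.range (chiι K g) ∪ Set.range (chiψ K g) =
      (chiIdeal K g).mkQ '' Set.range (FreeLieAlgebra.of K) := by
    rw [← Set.range_comp, ← Set.Sum.elim_range]
    congr 1
    ext (x | x) <;> rfl
  rw [this, ← LieSubalgebra.map_lieSpan, FreeLieAlgebra.lieSpan_range_of, ← LieHom.range_eq_map,
    LieHom.range_eq_top]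
  exact (chiIdeal K g).mkQ_surjective

variable {K g} {T : Type*} [LieRing T] [LieAlgebra K T]

noncomputable def chiLift (α β : g →ₗ⁅K⁆ T) (h : ∀ x, ⁅α x, β x⁆ = 0) : chi K g →ₗ⁅K⁆ T :=
  (chiIdeal K g).liftQ (FreeLieAlgebra.lift K (Sum.elim α β)) <| by
    rw [chiIdeal, LieSubmodule.lieSpan_le]
    rintro z (⟨x, y, rfl⟩ | ⟨c, x, rfl⟩ | ⟨x, y, rfl⟩ | ⟨x, y, rfl⟩ | ⟨c, x, rfl⟩ | ⟨x, y, rfl⟩ |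
      ⟨x, rfl⟩) <;> simp [ofl, ofr, h]

@[simp]
lemma chiLift_chiι (α β : g →ₗ⁅K⁆ T) (h : ∀ x, ⁅α x, β x⁆ = 0) (x : g) :
    chiLift α β h (chiι K g x) = α x :=
  FreeLieAlgebra.lift_of_apply _ _

@[simp]
lemma chiLift_chiψ (α β : g →ₗ⁅K⁆ T) (h : ∀ x, ⁅α x, β x⁆ = 0) (x : g) :
    chiLift α β h (chiψ K g x) = β x :=
  FreeLieAlgebra.lift_of_apply _ _

end Chi

section Abelianization

variable (K : Type u) [Field K] (g : Type v) [LieRing g] [LieAlgebra K g]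

local notation "Q" => chi K g ⧸ (⁅chiL K g, chiL K g⁆ : LieIdeal K (chi K g))
local notation "π" => LieIdeal.mkQ (⁅chiL K g, chiL K g⁆ : LieIdeal K (chi K g))

noncomputable def chiDiff : g →ₗ[K] chi K g :=
  (chiιHom K g).toLinearMap - (chiψHom K g).toLinearMap

lemma chiDiff_apply (x : g) : chiDiff K g x = chiι K g x - chiψ K g x := rfl

lemma chiDiff_mem_chiL (x : g) : chiDiff K g x ∈ chiL K g :=
  LieSubmodule.subset_lieSpan ⟨x, rfl⟩

lemma lie_chiDiff_chiι (x y : g) :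
    ⁅chiDiff K g x, chiι K g y⁆ = ⁅chiι K g x, chiDiff K g y⁆ := by
  rw [chiDiff_apply, chiDiff_apply, sub_lie, lie_sub, lie_chiψ_chiι]

lemma chiDiff_lie (x y : g) :
    chiDiff K g ⁅x, y⁆ = ⁅chiι K g x, chiDiff K g y⁆ + ⁅chiDiff K g x, chiι K g y⁆ -
      ⁅chiDiff K g x, chiDiff K g y⁆ := by
  simp only [chiDiff_apply, chiι_lie, chiψ_lie, lie_sub, sub_lie]
  abel

noncomputable def quotDiff : g →ₗ[K] Q := (π).toLinearMap ∘ₗ chiDiff K g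

lemma quotDiff_apply (x : g) : quotDiff K g x = π (chiDiff K g x) := rfl

lemma mkQ_lie_chiDiff_chiDiff (x y : g) : π ⁅chiDiff K g x, chiDiff K g y⁆ = 0 :=
  LieSubmodule.Quotient.mk_eq_zero'.2 (LieSubmodule.lie_mem_lie (chiDiff_mem_chiL K g x) (chiDiff_mem_chiL K g y))

lemma lie_quotDiff_quotDiff (x y : g) : ⁅quotDiff K g x, quotDiff K g y⁆ = 0 := by
  rw [quotDiff_apply, quotDiff_apply, ← LieHom.map_lie]
  exact mkQ_lie_chiDiff_chiDiff K g x y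

lemma quotDiff_lie (x y : g) :
    quotDiff K g ⁅x, y⁆ = (2 : K) • ⁅π (chiι K g x), quotDiff K g y⁆ := by
  rw [quotDiff_apply, chiDiff_lie, lie_chiDiff_chiι, map_sub, mkQ_lie_chiDiff_chiDiff, sub_zero,
    ← two_smul K, map_smul, LieHom.map_lie]
  rfl

/-- Expanding `⁅⁅x, y⁆, z⁆` once as a bracket with `z` and once by the Jacobi identity gives
`2 X = 4 X` for the same `X`. -/
lemma quotDiff_lie_lie [Invertible (2 : K)] (x y z : g) : quotDiff K g ⁅⁅x, y⁆, z⁆ = 0 := by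
  set X := ⁅π (chiι K g ⁅x, y⁆), quotDiff K g z⁆
  have h₂ : quotDiff K g ⁅⁅x, y⁆, z⁆ = (2 : K) • X := quotDiff_lie K g _ z
  have h₄ : quotDiff K g ⁅⁅x, y⁆, z⁆ = (2 : K) • (2 : K) • X := by
    rw [lie_lie, map_sub, quotDiff_lie, quotDiff_lie, quotDiff_lie, quotDiff_lie, lie_smul,
      lie_smul, ← smul_sub, ← smul_sub, ← lie_lie, ← LieHom.map_lie, ← chiι_lie]
  have hX : X = (2 : K) • X :=
    smul_right_injective Q (Invertible.ne_zero (2 : K)) (h₂.symm.trans h₄)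
  rw [two_smul, left_eq_add] at hX
  rw [h₂, hX, smul_zero]

lemma quotDiff_eq_zero_of_mem_lowerCentralSeries [Invertible (2 : K)] {x : g}
    (hx : x ∈ LieModule.lowerCentralSeries K g g 2) : quotDiff K g x = 0 := by
  let N : LieIdeal K g :=
    { toSubmodule := LinearMap.ker (quotDiff K g)
      lie_mem := fun {w t} (ht : quotDiff K g t = 0) => by
        change quotDiff K g ⁅w, t⁆ = 0
        rw [quotDiff_lie, ht, lie_zero, smul_zero] }
  exact lowerCentralSeries_two_le (N := N) (quotDiff_lie_lie K g) hx

lemma lie_mem_range_quotDiff [Invertible (2 : K)] (a : Q) {r : Q}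
    (hr : r ∈ LinearMap.range (quotDiff K g)) : ⁅a, r⁆ ∈ LinearMap.range (quotDiff K g) := by
  have hι : ∀ x, ∀ r ∈ LinearMap.range (quotDiff K g),
      ⁅π (chiι K g x), r⁆ ∈ LinearMap.range (quotDiff K g) := by
    rintro x _ ⟨y, rfl⟩
    refine ⟨(⅟2 : K) • ⁅x, y⁆, ?_⟩
    rw [map_smul, quotDiff_lie, smul_smul, invOf_mul_self, one_smul]
  obtain ⟨z, rfl⟩ := LieIdeal.mkQ_surjective _ a
  have hz : z ∈ LieSubalgebra.lieSpan K (chi K g) (Set.range (chiι K g) ∪ Set.range (chiψ K g)) :=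
    chi_lieSpan_eq_top K g ▸ LieSubalgebra.mem_top z
  induction hz using LieSubalgebra.lieSpan_induction generalizing r with
  | mem _ hz =>
    rcases hz with ⟨x, rfl⟩ | ⟨x, rfl⟩
    · exact hι x r hr
    · obtain ⟨y, rfl⟩ := hr
      have hψ : π (chiψ K g x) = π (chiι K g x) - quotDiff K g x := by
        rw [quotDiff_apply, chiDiff_apply, map_sub, sub_sub_cancel]
      rw [hψ, sub_lie, lie_quotDiff_quotDiff, sub_zero]
      exact hι x _ ⟨y, rfl⟩
  | zero => simp
  | add _ _ _ _ h₁ h₂ => rw [map_add, add_lie]; exact add_mem (h₁ hr) (h₂ hr)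
  | smul c _ _ h₁ => rw [map_smul, smul_lie]; exact Submodule.smul_mem _ c (h₁ hr)
  | lie _ _ _ _ h₁ h₂ => rw [LieHom.map_lie, lie_lie]; exact sub_mem (h₁ (h₂ hr)) (h₂ (h₁ hr))

lemma map_mkQ_chiL_eq_range_quotDiff [Invertible (2 : K)] :
    Submodule.map (⁅chiL K g, chiL K g⁆ : LieIdeal K (chi K g)).toSubmodule.mkQ
      (chiL K g).toSubmodule = LinearMap.range (quotDiff K g) := by
  refine le_antisymm ?_ ?_
  · let N : LieIdeal K (chi K g) :=
      { toSubmodule := (LinearMap.range (quotDiff K g)).comap (π).toLinearMap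
        lie_mem := fun {a _} ht => by
          change π ⁅a, _⁆ ∈ LinearMap.range (quotDiff K g)
          rw [LieHom.map_lie]
          exact lie_mem_range_quotDiff K g _ ht }
    have hL : chiL K g ≤ N := by
      rw [chiL, LieSubmodule.lieSpan_le]
      rintro _ ⟨x, rfl⟩
      exact ⟨x, rfl⟩
    rintro _ ⟨z, hz, rfl⟩
    exact hL hz
  · rintro _ ⟨x, rfl⟩
    exact ⟨chiDiff K g x, chiDiff_mem_chiL K g x, rfl⟩

end Abelianization

section SemidirectProduct

open LieAlgebra LieModule.Cohomology

variable {K : Type u} [Field K] {g : Type v} [LieRing g] [LieAlgebra K g]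
  {M : Type*} [AddCommGroup M] [Module K M] [LieRingModule g M] [LieModule K g M]

/-- `ofTwoCocycle 0` is the semidirect product `g ⋉ M`. -/
def cocycleGraph (f : g →ₗ[K] M) (hf : ∀ x y, f ⁅x, y⁆ = ⁅x, f y⁆ - ⁅y, f x⁆) :
    g →ₗ⁅K⁆ ofTwoCocycle (0 : twoCocycle K g M) where
  toFun x := ofProd _ (x, f x)
  map_add' x y := by simp [← of_add]
  map_smul' c x := by simp [← of_smul]
  map_lie' {x y} := by simp [bracket_ofTwoCocycle, hf]

lemma cocycleGraph_apply (f : g →ₗ[K] M) (hf : ∀ x y, f ⁅x, y⁆ = ⁅x, f y⁆ - ⁅y, f x⁆) (x : g) :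
    cocycleGraph f hf x = ofProd _ (x, f x) := rfl

def semidirectFst : ofTwoCocycle (0 : twoCocycle K g M) →ₗ⁅K⁆ g where
  toFun z := ((ofProd _).symm z).1
  map_add' _ _ := rfl
  map_smul' _ _ := rfl
  map_lie' := rfl

def semidirectSnd : ofTwoCocycle (0 : twoCocycle K g M) →ₗ[K] M where
  toFun z := ((ofProd _).symm z).2
  map_add' _ _ := rfl
  map_smul' _ _ := rfl

@[simp]
lemma semidirectFst_ofProd (p : g × M) :
    semidirectFst (ofProd (0 : twoCocycle K g M) p) = p.1 := rfl

@[simp]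
lemma semidirectSnd_ofProd (p : g × M) :
    semidirectSnd (ofProd (0 : twoCocycle K g M) p) = p.2 := rfl

variable (K g) in
/-- `χ(g)` maps to `g ⋉ M` by `x ↦ (x, x • v)`, `xᵠ ↦ (x, 0)`; the image of `L(g)` lies in the
abelian ideal `M`, so this factors through `χ(g) / ⁅L(g), L(g)⁆`. -/
lemma exists_linearMap_quotDiff_eq_lie (v : M) (hv : ∀ x : g, ⁅x, ⁅x, v⁆⁆ = 0) :
    ∃ ℓ : chi K g ⧸ (⁅chiL K g, chiL K g⁆ : LieIdeal K (chi K g)) →ₗ[K] M,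
      ∀ x, ℓ (quotDiff K g x) = ⁅x, v⁆ := by
  let α := cocycleGraph (K := K) ((LieModule.toEnd K g M).flip v) fun x y => by simp
  let β := cocycleGraph (K := K) (0 : g →ₗ[K] M) fun x y => by simp
  let F := chiLift α β fun x => by
    simp [α, β, cocycleGraph_apply, bracket_ofTwoCocycle, hv, Prod.mk_zero_zero]
  have hL : chiL K g ≤ (semidirectFst.comp F).ker := by
    rw [chiL, LieSubmodule.lieSpan_le]
    rintro _ ⟨x, rfl⟩
    simp [F, α, β, cocycleGraph_apply]
  have hLL : (⁅chiL K g, chiL K g⁆ : LieIdeal K (chi K g)) ≤ F.ker := by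
    rw [LieSubmodule.lie_le_iff]
    intro a ha b hb
    have ha' : ((ofProd _).symm (F a)).1 = 0 := hL ha
    have hb' : ((ofProd _).symm (F b)).1 = 0 := hL hb
    rw [LieHom.mem_ker, LieHom.map_lie, bracket_ofTwoCocycle, ha', hb']
    simp [Prod.mk_zero_zero]
  refine ⟨semidirectSnd ∘ₗ (LieIdeal.liftQ _ F hLL).toLinearMap, fun x => ?_⟩
  simp [quotDiff_apply, chiDiff_apply, F, α, β, cocycleGraph_apply]

end SemidirectProduct

lemma LieSubmodule.Quotient.lie_mk_eq_mk_lie {R L : Type*} [CommRing R] [LieRing L]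
    [LieAlgebra R L] {I : LieIdeal R L} (x y : L) :
    ⁅x, (mk y : L ⧸ I)⁆ = mk ⁅x, y⁆ := rfl

section HalfBracketRep

attribute [local instance 100] LieRing.ofAssociativeRing

open LieSubmodule.Quotient

variable (K : Type u) [Field K] (g : Type v) [LieRing g] [LieAlgebra K g] [Invertible (2 : K)]

local notation "P" => g ⧸ LieModule.lowerCentralSeries K g g 2

/-- Left multiplication by `x` in the unital algebra `K ⊕ P` whose product on `P` is
`m * n = ½ ⁅m, n⁆` (associative because `P` is two-step nilpotent). -/
noncomputable def halfBracketRep : g →ₗ⁅K⁆ Module.End K (K × P) where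
  toFun x :=
    { toFun := fun v => (0, v.1 • (mk x : P) + (⅟2 : K) • ⁅x, v.2⁆)
      map_add' := fun v w => Prod.ext (by simp) (by simp [add_smul, smul_add]; abel)
      map_smul' := fun c v => by ext <;> simp [smul_add, mul_smul, smul_comm c] }
  map_add' x y := by ext v <;> simp [smul_add, add_lie]
  map_smul' c x := by ext v <;> simp [smul_comm c]
  map_lie' {x y} := by
    refine LinearMap.ext fun v => Prod.ext (by simp [Ring.lie_def]) ?_
    change v.1 • (mk ⁅x, y⁆ : P) + (⅟2 : K) • ⁅⁅x, y⁆, v.2⁆ =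
      ((0 : K) • (mk x : P) + (⅟2 : K) • ⁅x, v.1 • (mk y : P) + (⅟2 : K) • ⁅y, v.2⁆⁆) -
      ((0 : K) • (mk y : P) + (⅟2 : K) • ⁅y, v.1 • (mk x : P) + (⅟2 : K) • ⁅x, v.2⁆⁆)
    rw [lie_lie]
    simp only [lie_add, lie_smul, lie_lie_eq_zero_of_quotient_lowerCentralSeries_two,
      lie_mk_eq_mk_lie, sub_self, smul_zero, add_zero, zero_smul, zero_add]
    have hneg : (mk (-⁅x, y⁆) : P) = -mk ⁅x, y⁆ := Submodule.Quotient.mk_neg _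
    rw [← lie_skew y x, hneg, smul_neg, smul_neg, sub_neg_eq_add,
      ← add_smul, invOf_two_add_invOf_two, one_smul]

lemma halfBracketRep_apply (x : g) (v : K × P) :
    halfBracketRep K g x v = (0, v.1 • (mk x : P) + (⅟2 : K) • ⁅x, v.2⁆) := rfl

lemma halfBracketRep_apply_one_zero (x : g) : halfBracketRep K g x (1, 0) = (0, mk x) := by
  simp [halfBracketRep_apply]

lemma halfBracketRep_mul_self (x : g) : halfBracketRep K g x * halfBracketRep K g x = 0 := by
  refine LinearMap.ext fun v => ?_
  simp [halfBracketRep_apply, lie_mk_eq_mk_lie, lie_lie_eq_zero_of_quotient_lowerCentralSeries_two]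

end HalfBracketRep

section Enveloping

attribute [local instance 100] LieRing.ofAssociativeRing

open UniversalEnvelopingAlgebra

lemma UniversalEnvelopingAlgebra.adjoin_range_ι {R L : Type*} [CommRing R] [LieRing L]
    [LieAlgebra R L] : Algebra.adjoin R (Set.range (ι R (L := L))) = ⊤ := by
  set S := Algebra.adjoin R (Set.range (ι R (L := L)))
  let f : L →ₗ⁅R⁆ S :=
    { toFun := fun x => ⟨ι R x, Algebra.subset_adjoin ⟨x, rfl⟩⟩
      map_add' := fun x y => Subtype.ext (map_add _ x y)
      map_smul' := fun c x => Subtype.ext (map_smul _ c x)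
      map_lie' := fun {x y} => Subtype.ext <| by simp [Ring.lie_def] }
  have hS : S.val.comp (lift R f) = AlgHom.id R _ := hom_ext R <| LieHom.ext fun x => by
    simp [f]
  refine eq_top_iff.2 fun u _ => ?_
  rw [← AlgHom.id_apply (R := R) u, ← hS]
  exact Subtype.property _

variable (K : Type u) [Field K] (g : Type v) [LieRing g] [LieAlgebra K g]

local notation "𝓤" => UniversalEnvelopingAlgebra K g

def sqIdeal : Submodule K 𝓤 :=
  Submodule.span K {z : 𝓤 | ∃ (a b : 𝓤) (x : g), z = a * (ι K x * ι K x) * b}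

lemma mul_mem_sqIdeal_left (u : 𝓤) {z : 𝓤} (hz : z ∈ sqIdeal K g) : u * z ∈ sqIdeal K g := by
  induction hz using Submodule.span_induction with
  | mem _ hz =>
    obtain ⟨a, b, x, rfl⟩ := hz
    exact Submodule.subset_span ⟨u * a, b, x, by noncomm_ring⟩
  | zero => simp
  | add _ _ _ _ h₁ h₂ => rw [mul_add]; exact add_mem h₁ h₂
  | smul c _ _ h₁ => rw [mul_smul_comm]; exact Submodule.smul_mem _ c h₁

lemma mul_mem_sqIdeal_right (u : 𝓤) {z : 𝓤} (hz : z ∈ sqIdeal K g) : z * u ∈ sqIdeal K g := by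
  induction hz using Submodule.span_induction with
  | mem _ hz =>
    obtain ⟨a, b, x, rfl⟩ := hz
    exact Submodule.subset_span ⟨a, b * u, x, by noncomm_ring⟩
  | zero => simp
  | add _ _ _ _ h₁ h₂ => rw [add_mul]; exact add_mem h₁ h₂
  | smul c _ _ h₁ => rw [smul_mul_assoc]; exact Submodule.smul_mem _ c h₁

lemma ι_mul_self_mem_sqIdeal (x : g) : ι K x * ι K x ∈ sqIdeal K g :=
  Submodule.subset_span ⟨1, 1, x, by rw [one_mul, mul_one]⟩

lemma ι_mul_add_ι_mul_mem_sqIdeal (x y : g) :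
    ι K x * ι K y + ι K y * ι K x ∈ sqIdeal K g := by
  have h : ι K x * ι K y + ι K y * ι K x =
      ι K (x + y) * ι K (x + y) - ι K x * ι K x - ι K y * ι K y := by
    rw [map_add]; noncomm_ring
  rw [h]
  exact sub_mem (sub_mem (ι_mul_self_mem_sqIdeal K g _) (ι_mul_self_mem_sqIdeal K g x))
    (ι_mul_self_mem_sqIdeal K g y)

lemma ι_lie (x y : g) : ι K ⁅x, y⁆ = ι K x * ι K y - ι K y * ι K x := by
  rw [LieHom.map_lie, Ring.lie_def]

lemma ι_lie_lie_mem_sqIdeal (x y z : g) : ι K ⁅⁅x, y⁆, z⁆ ∈ sqIdeal K g := by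
  set a := ι K x
  set b := ι K y
  set c := ι K z
  have h : ι K ⁅⁅x, y⁆, z⁆ =
      a * (c * b + b * c) + (c * b + b * c) * a - ((c * a + a * c) * b + b * (c * a + a * c)) := by
    rw [ι_lie, ι_lie]
    noncomm_ring
  have hcb := ι_mul_add_ι_mul_mem_sqIdeal K g z y
  have hca := ι_mul_add_ι_mul_mem_sqIdeal K g z x
  rw [h]
  exact sub_mem (add_mem (mul_mem_sqIdeal_left K g a hcb) (mul_mem_sqIdeal_right K g a hcb))
    (add_mem (mul_mem_sqIdeal_right K g b hca) (mul_mem_sqIdeal_left K g b hca))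

lemma ι_mem_sqIdeal_of_mem_lowerCentralSeries {x : g}
    (hx : x ∈ LieModule.lowerCentralSeries K g g 2) : ι K x ∈ sqIdeal K g := by
  let N : LieIdeal K g :=
    { toSubmodule := (sqIdeal K g).comap (ι K).toLinearMap
      lie_mem := fun {w t} (ht : ι K t ∈ sqIdeal K g) => by
        change ι K ⁅w, t⁆ ∈ sqIdeal K g
        rw [ι_lie]
        exact sub_mem (mul_mem_sqIdeal_left K g _ ht) (mul_mem_sqIdeal_right K g _ ht) }
  exact lowerCentralSeries_two_le (N := N) (ι_lie_lie_mem_sqIdeal K g) hx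

lemma span_one_sup_range_ι_sup_sqIdeal [Invertible (2 : K)] :
    K ∙ (1 : 𝓤) ⊔ LinearMap.range (ι K (L := g)).toLinearMap ⊔ sqIdeal K g = ⊤ := by
  set W := K ∙ (1 : 𝓤) ⊔ LinearMap.range (ι K (L := g)).toLinearMap ⊔ sqIdeal K g
  have hι : ∀ x, ι K x ∈ W := fun x => Submodule.mem_sup_left (Submodule.mem_sup_right ⟨x, rfl⟩)
  have hI : sqIdeal K g ≤ W := le_sup_right
  have hιι : ∀ x y, ι K x * ι K y ∈ W := fun x y => by
    have h : ι K x * ι K y = (⅟2 : K) • (ι K ⁅x, y⁆ + (ι K x * ι K y + ι K y * ι K x)) := by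
      rw [ι_lie, sub_add_add_cancel, ← two_smul K, smul_smul, invOf_mul_self, one_smul]
    rw [h]
    exact W.smul_mem _ (add_mem (hι _) (hI (ι_mul_add_ι_mul_mem_sqIdeal K g x y)))
  have hmul : ∀ x, ∀ w ∈ W, ι K x * w ∈ W := by
    intro x w hw
    obtain ⟨w', hw', i, hi, rfl⟩ := Submodule.mem_sup.1 hw
    obtain ⟨_, ho, _, ⟨y, rfl⟩, rfl⟩ := Submodule.mem_sup.1 hw'
    obtain ⟨k, rfl⟩ := Submodule.mem_span_singleton.1 ho
    rw [mul_add, mul_add, mul_smul_comm, mul_one]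
    exact add_mem (add_mem (W.smul_mem k (hι x)) (hιι x y))
      (hI (mul_mem_sqIdeal_left K g _ hi))
  refine Submodule.eq_top_iff'.2 fun u => ?_
  have hu : u ∈ Algebra.adjoin K (Set.range (ι K (L := g))) := by
    rw [adjoin_range_ι]; trivial
  suffices ∀ w ∈ W, u * w ∈ W by simpa using this 1 (Submodule.mem_sup_left
    (Submodule.mem_sup_left (Submodule.mem_span_singleton_self 1)))
  induction hu using Algebra.adjoin_induction with
  | mem _ hu => obtain ⟨x, rfl⟩ := hu; exact hmul x
  | algebraMap k => intro w hw; rw [Algebra.algebraMap_eq_smul_one, smul_mul_assoc, one_mul]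
                    exact W.smul_mem k hw
  | add _ _ _ _ h₁ h₂ => intro w hw; rw [add_mul]; exact add_mem (h₁ w hw) (h₂ w hw)
  | mul _ _ _ _ h₁ h₂ => intro w hw; rw [mul_assoc]; exact h₁ _ (h₂ w hw)

lemma lieAugmentation_ι (x : g) : lieAugmentation K g (ι K x) = 0 := by
  rw [lieAugmentation, lift_ι_apply]
  rfl

lemma lieAugmentation_eq_zero_of_mem_sqIdeal {z : 𝓤} (hz : z ∈ sqIdeal K g) :
    lieAugmentation K g z = 0 := by
  induction hz using Submodule.span_induction with
  | mem _ hz =>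
    obtain ⟨a, b, x, rfl⟩ := hz
    simp only [map_mul, lieAugmentation_ι, mul_zero, zero_mul]
  | zero => simp
  | add _ _ _ _ h₁ h₂ => rw [map_add, h₁, h₂, add_zero]
  | smul c _ _ h₁ => rw [map_smul, h₁, smul_zero]

lemma map_mkQ_ker_lieAugmentation [Invertible (2 : K)] :
    Submodule.map (sqIdeal K g).mkQ (LinearMap.ker (lieAugmentation K g).toLinearMap) =
      LinearMap.range ((sqIdeal K g).mkQ ∘ₗ (ι K (L := g)).toLinearMap) := by
  refine le_antisymm ?_ ?_
  · rintro _ ⟨u, hu, rfl⟩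
    have hu' : u ∈ K ∙ (1 : 𝓤) ⊔ LinearMap.range (ι K (L := g)).toLinearMap ⊔ sqIdeal K g := by
      rw [span_one_sup_range_ι_sup_sqIdeal]; trivial
    obtain ⟨w, hw, i, hi, hwi⟩ := Submodule.mem_sup.1 hu'
    obtain ⟨o, ho, _, ⟨x, hx⟩, hox⟩ := Submodule.mem_sup.1 hw
    obtain ⟨k, hk⟩ := Submodule.mem_span_singleton.1 ho
    have hu_eq : u = k • 1 + ι K x + i := by rw [← hwi, ← hox, ← hk, ← hx]; rfl
    have hk0 : k = 0 := by
      have hu0 : lieAugmentation K g u = 0 := hu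
      rwa [hu_eq, map_add, map_add, map_smul, map_one, lieAugmentation_ι,
        lieAugmentation_eq_zero_of_mem_sqIdeal K g hi, add_zero, add_zero, smul_eq_mul,
        mul_one] at hu0
    refine ⟨x, ?_⟩
    rw [hu_eq, hk0, zero_smul, zero_add, map_add, (Submodule.mkQ_apply _ i),
      (Submodule.Quotient.mk_eq_zero _).2 hi, add_zero]
    rfl
  · rintro _ ⟨x, rfl⟩
    exact ⟨ι K x, lieAugmentation_ι K g x, rfl⟩

end Enveloping

lemma Module.finite_quotient_lowerCentralSeries_two {R L : Type*} [CommRing R] [LieRing L]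
    [LieAlgebra R L] {s : Set L} (hs : s.Finite) (hgen : LieSubalgebra.lieSpan R L s = ⊤) :
    Module.Finite R (L ⧸ LieModule.lowerCentralSeries R L L 2) := by
  set I := LieModule.lowerCentralSeries R L L 2
  refine Module.finite_of_lieSpan_eq_top_of_lie_lie_eq_zero (fun a b c => ?_)
    (hs.image (LieIdeal.mkQ I)) ?_
  · obtain ⟨x, rfl⟩ := LieIdeal.mkQ_surjective I a
    obtain ⟨y, rfl⟩ := LieIdeal.mkQ_surjective I b
    exact lie_lie_eq_zero_of_quotient_lowerCentralSeries_two x y c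
  · rw [← LieSubalgebra.map_lieSpan, hgen, ← LieHom.range_eq_map, LieHom.range_eq_top]
    exact LieIdeal.mkQ_surjective I

section Isomorphisms

attribute [local instance 100] LieRing.ofAssociativeRing

open UniversalEnvelopingAlgebra LieSubmodule.Quotient

variable (K : Type u) [Field K] (g : Type v) [LieRing g] [LieAlgebra K g] [Invertible (2 : K)]

local notation "P" => g ⧸ LieModule.lowerCentralSeries K g g 2
local notation "Q" => chi K g ⧸ (⁅chiL K g, chiL K g⁆ : LieIdeal K (chi K g))
local notation "𝓤" => UniversalEnvelopingAlgebra K g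

noncomputable def lcsQuotToChiQuot : P →ₗ[K] Q :=
  (LieModule.lowerCentralSeries K g g 2).toSubmodule.liftQ (quotDiff K g)
    fun _ hx => LinearMap.mem_ker.2 (quotDiff_eq_zero_of_mem_lowerCentralSeries K g hx)

noncomputable def lcsQuotToSqQuot : P →ₗ[K] 𝓤 ⧸ sqIdeal K g :=
  (LieModule.lowerCentralSeries K g g 2).toSubmodule.liftQ
    ((sqIdeal K g).mkQ ∘ₗ (ι K (L := g)).toLinearMap)
    fun _ hx => LinearMap.mem_ker.2 <|
      (Submodule.Quotient.mk_eq_zero _).2 (ι_mem_sqIdeal_of_mem_lowerCentralSeries K g hx)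

lemma lcsQuotToChiQuot_injective : Function.Injective (lcsQuotToChiQuot K g) := by
  let := LieRingModule.compLieHom (K × P) (halfBracketRep K g)
  let := LieModule.compLieHom (K × P) (halfBracketRep K g)
  have hbracket : ∀ (x : g) (v : K × P), ⁅x, v⁆ = halfBracketRep K g x v := fun _ _ => rfl
  obtain ⟨ℓ, hℓ⟩ := exists_linearMap_quotDiff_eq_lie K g ((1, 0) : K × P) fun x => by
    rw [hbracket, hbracket, ← Module.End.mul_apply, halfBracketRep_mul_self, LinearMap.zero_apply]
  refine Function.LeftInverse.injective (g := LinearMap.snd K K P ∘ₗ ℓ) fun p => ?_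
  obtain ⟨x, rfl⟩ := surjective_mk' _ p
  change (ℓ (quotDiff K g x)).2 = _
  rw [hℓ, hbracket, halfBracketRep_apply_one_zero]
  rfl

lemma lcsQuotToSqQuot_injective : Function.Injective (lcsQuotToSqQuot K g) := by
  let r : 𝓤 →ₗ[K] P :=
    LinearMap.snd K K P ∘ₗ LinearMap.applyₗ ((1, 0) : K × P) ∘ₗ
      (lift K (halfBracketRep K g)).toLinearMap
  have hr : sqIdeal K g ≤ LinearMap.ker r := by
    rw [sqIdeal, Submodule.span_le]
    rintro _ ⟨a, b, x, rfl⟩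
    simp [r, halfBracketRep_mul_self]
  refine Function.LeftInverse.injective (g := (sqIdeal K g).liftQ r hr) fun p => ?_
  obtain ⟨x, rfl⟩ := surjective_mk' _ p
  change r (ι K x) = _
  simp [r, halfBracketRep_apply_one_zero]

noncomputable def lcsQuotEquivChiLAbelianization :
    P ≃ₗ[K] Submodule.map (⁅chiL K g, chiL K g⁆ : LieIdeal K (chi K g)).toSubmodule.mkQ
      (chiL K g).toSubmodule :=
  (LinearEquiv.ofInjective _ (lcsQuotToChiQuot_injective K g)).trans <| LinearEquiv.ofEq _ _ <| by
    rw [lcsQuotToChiQuot, Submodule.range_liftQ, map_mkQ_chiL_eq_range_quotDiff]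

noncomputable def lcsQuotEquivAugQuot :
    P ≃ₗ[K] Submodule.map (sqIdeal K g).mkQ (LinearMap.ker (lieAugmentation K g).toLinearMap) :=
  (LinearEquiv.ofInjective _ (lcsQuotToSqQuot_injective K g)).trans <| LinearEquiv.ofEq _ _ <| by
    rw [lcsQuotToSqQuot, Submodule.range_liftQ, map_mkQ_ker_lieAugmentation]

end Isomorphisms

/-- If `g` is finitely generated, then the abelianization `L(g)/[L(g), L(g)]`
is finite dimensional; equivalently, writing `I` for the two-sided associative ideal of
`U(g)` generated by the squares `x²` (`x ∈ g`), the quotient `Aug(U(g))/I` is finite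
dimensional, and `L(g)/[L(g), L(g)] ≅ Aug(U(g))/I` as `K`-vector spaces. -/
theorem chi_L_abelianization_finiteDimensional
    (K : Type u) [Field K] (hchar : ringChar K ≠ 2)
    (g : Type v) [LieRing g] [LieAlgebra K g]
    (hfg : ∃ s : Finset g, LieSubalgebra.lieSpan K g (s : Set g) = ⊤) :
    FiniteDimensional K
        ↥(Submodule.map
            (LieSubmodule.toSubmodule (⁅chiL K g, chiL K g⁆ : LieIdeal K (chi K g))).mkQ
            (LieSubmodule.toSubmodule (chiL K g))) ∧
      FiniteDimensional K
        ↥(Submodule.map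
            (Submodule.span K { z : UniversalEnvelopingAlgebra K g |
                ∃ (a b : UniversalEnvelopingAlgebra K g) (x : g),
                  z = a * (UniversalEnvelopingAlgebra.ι K x *
                    UniversalEnvelopingAlgebra.ι K x) * b }).mkQ
            (LinearMap.ker (lieAugmentation K g).toLinearMap)) ∧
      Nonempty
        (↥(Submodule.map
            (LieSubmodule.toSubmodule (⁅chiL K g, chiL K g⁆ : LieIdeal K (chi K g))).mkQ
            (LieSubmodule.toSubmodule (chiL K g))) ≃ₗ[K]
          ↥(Submodule.map
            (Submodule.span K { z : UniversalEnvelopingAlgebra K g |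
                ∃ (a b : UniversalEnvelopingAlgebra K g) (x : g),
                  z = a * (UniversalEnvelopingAlgebra.ι K x *
                    UniversalEnvelopingAlgebra.ι K x) * b }).mkQ
            (LinearMap.ker (lieAugmentation K g).toLinearMap))) := by
  have : Invertible (2 : K) := invertibleOfNonzero (Ring.two_ne_zero hchar)
  obtain ⟨s, hs⟩ := hfg
  have := Module.finite_quotient_lowerCentralSeries_two s.finite_toSet hs
  let e₁ := lcsQuotEquivChiLAbelianization K g
  let e₂ := lcsQuotEquivAugQuot K g
  exact ⟨e₁.finiteDimensional, e₂.finiteDimensional, ⟨e₁.symm.trans e₂⟩⟩
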